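/- Let (C^1, …, C^k) be an admissible family in ℝ^n and let Q(C^1,…,C^k) := conv(⋃_{i=1}^k C^i × {e^i}) ⊆ ℝ^n × ℝ^k. Then Q(C^1,…,C^k) is a closed convex set and rec(Q(C^1,…,C^k)) = {(x, y) ∈ ℝ^n × ℝ^k : x ∈ rec(C^1), y = 0}. -/

import Mathlib

open Pointwise Set

noncomputable section

/-- The recession cone of a set. -/
def recCone {E : Type*} [AddCommGroup E] [Module ℝ E] (S : Set E) : Set E :=
  {d | ∀ x ∈ S, ∀ t : ℝ, 0 ≤ t → x + t • d ∈ S}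

/-- An admissible family: each member is a nonempty closed convex set and all members share
the same recession cone. -/
def Admissible {n k : ℕ} (C : Fin k → Set (Fin n → ℝ)) : Prop :=
  (∀ i, (C i).Nonempty) ∧ (∀ i, IsClosed (C i)) ∧ (∀ i, Convex ℝ (C i)) ∧
    ∀ i j, recCone (C i) = recCone (C j)

/-- The Cayley embedding `Q(C¹,…,Cᵏ) = conv(⋃ᵢ Cⁱ × {eⁱ})`. -/
def CayleyQ {n k : ℕ} (C : Fin k → Set (Fin n → ℝ)) :
    Set ((Fin n → ℝ) × (Fin k → ℝ)) :=
  convexHull ℝ (⋃ i, (C i) ×ˢ ({Pi.single i 1} : Set (Fin k → ℝ)))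

/-!
`CayleyQ C` is the set of points `(∑ λᵢ cᵢ, λ)` with `λ` in the standard simplex and `cᵢ ∈ Cᵢ`:
this set is already convex, because `(a + b) • Cᵢ = a • Cᵢ + b • Cᵢ` for convex `Cᵢ`.

For closedness take a convergent sequence of such points. Projecting every `cᵢ` along the lineality
space `L = R ∩ -R` of the common recession cone `R` keeps it in `Cᵢ`, and afterwards the summands
`λᵢ cᵢ` stay bounded: otherwise a normalised limit gives directions `uᵢ ∈ R`, not all zero and
lying in a complement of `L`, with `∑ uᵢ = 0`; but then `-uᵢ = ∑_{j ≠ i} uⱼ ∈ R`, so `uᵢ ∈ L`.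
In the limit the summands of positive weight lie in `λᵢ • Cᵢ`, those of vanishing weight in `R`,
and these, together with the discarded component in `L`, are absorbed by moving along a direction
of `R`.

A recession direction `(d, δ)` of `CayleyQ C` has `δ = 0` because the simplex is bounded, and
`d ∈ R` by looking at the face `C¹ × {e¹}`.
-/

open Filter Topology Bornology

section RecessionCone

variable {E : Type*} [AddCommGroup E] [Module ℝ E]

def recPointedCone (S : Set E) : PointedCone ℝ E where
  carrier := recCone S
  zero_mem' x hx t _ := by simpa using hx
  add_mem' {d d'} hd hd' x hx t ht := by
    rw [smul_add, ← add_assoc]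
    exact hd' _ (hd x hx t ht) t ht
  smul_mem' c d hd x hx t ht := by
    rw [Nonneg.mk_smul, smul_smul]
    exact hd x hx _ (mul_nonneg ht c.2)

theorem add_mem_of_mem_recCone {S : Set E} {x d : E} (hx : x ∈ S) (hd : d ∈ recCone S) :
    x + d ∈ S := by
  simpa using hd x hx 1 zero_le_one

theorem PointedCone.eq_zero_of_sum_eq_zero_of_disjoint_lineal {ι : Type*} [Fintype ι]
    [DecidableEq ι] {K : PointedCone ℝ E} {M : Submodule ℝ E}
    (hKM : Disjoint K.lineal M) {u : ι → E} (hu : ∀ i, u i ∈ K ∧ u i ∈ M)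
    (hsum : ∑ i, u i = 0) : u = 0 := by
  funext i
  have hneg : -u i = ∑ j ∈ Finset.univ.erase i, u j := by
    rw [Finset.sum_erase_eq_sub (Finset.mem_univ i), hsum, zero_sub]
  have hL : u i ∈ K.lineal :=
    PointedCone.mem_lineal.2 ⟨(hu i).1, hneg ▸ K.sum_mem fun j _ => (hu j).1⟩
  exact Submodule.disjoint_def.1 hKM _ hL (hu i).2

end RecessionCone

section Limits

variable {E : Type*} [NormedAddCommGroup E] [NormedSpace ℝ E] {α : Type*} {l : Filter α}
  {C : Set E} {t : α → ℝ} {v : α → E} {w : E}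

theorem mem_recCone_of_tendsto [l.NeBot] (hcl : IsClosed C) (hcv : Convex ℝ C)
    (ht : ∀ a, 0 ≤ t a) (ht0 : Tendsto t l (𝓝 0)) (hv : ∀ a, v a ∈ t a • C)
    (hw : Tendsto v l (𝓝 w)) : w ∈ recCone C := by
  intro x hx s hs
  have hsmall : ∀ᶠ a in l, s * t a ≤ 1 := by
    have := ht0.const_mul s
    rw [mul_zero] at this
    exact this.eventually_le_const one_pos
  have hmem : ∀ᶠ a in l, (1 - s * t a) • x + s • v a ∈ C := by
    filter_upwards [hsmall] with a ha
    obtain ⟨c, hc, hca⟩ := hv a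
    rw [← hca, smul_smul]
    exact hcv hx hc (by linarith) (mul_nonneg hs (ht a)) (by ring)
  have hlim : Tendsto (fun a => (1 - s * t a) • x + s • v a) l (𝓝 (x + s • w)) := by
    have := (((ht0.const_mul s).const_sub 1).smul_const x).add (hw.const_smul s)
    simpa using this
  exact hcl.mem_of_tendsto hlim hmem

theorem mem_smul_set_of_tendsto [l.NeBot] (hcl : IsClosed C) {τ : ℝ} (hτ : τ ≠ 0)
    (ht : Tendsto t l (𝓝 τ)) (hv : ∀ a, v a ∈ t a • C) (hw : Tendsto v l (𝓝 w)) :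
    w ∈ τ • C := by
  rw [mem_smul_set_iff_inv_smul_mem₀ hτ]
  refine hcl.mem_of_tendsto ((ht.inv₀ hτ).smul hw) ?_
  filter_upwards [ht.eventually_ne hτ] with a ha
  exact (mem_smul_set_iff_inv_smul_mem₀ ha _ _).1 (hv a)

theorem eq_zero_of_forall_add_smul_mem {S : Set E} (hS : IsBounded S) {x d : E}
    (h : ∀ t : ℝ, 0 ≤ t → x + t • d ∈ S) : d = 0 := by
  obtain ⟨R, hR⟩ := hS.exists_norm_le
  by_contra hd
  have hpos : 0 < ‖d‖ := norm_pos_iff.2 hd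
  set t := (R + ‖x‖ + 1) / ‖d‖
  have hx : ‖x‖ ≤ R := hR x (by simpa using h 0 le_rfl)
  have ht : 0 ≤ t := div_nonneg (by linarith [norm_nonneg x]) hpos.le
  have h1 : ‖t • d‖ ≤ R + ‖x‖ := by
    calc ‖t • d‖ = ‖(x + t • d) - x‖ := by rw [add_sub_cancel_left]
      _ ≤ ‖x + t • d‖ + ‖x‖ := norm_sub_le _ _
      _ ≤ R + ‖x‖ := by linarith [hR _ (h t ht)]
  rw [norm_smul, Real.norm_of_nonneg ht, div_mul_cancel₀ _ hpos.ne'] at h1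
  linarith

end Limits

section WeightedSums

variable {E ι : Type*} [AddCommGroup E] [Module ℝ E] [Fintype ι] {C : ι → Set E}

/-- The points `(∑ λᵢ cᵢ, λ)` with `λ ∈ stdSimplex` and `cᵢ ∈ Cᵢ`, recorded through the summands
`vᵢ = λᵢ cᵢ ∈ λᵢ • Cᵢ`, the quantities that pass to the limit when some `λᵢ → 0`. -/
def weightedSums (C : ι → Set E) : Set (E × (ι → ℝ)) :=
  {p | p.2 ∈ stdSimplex ℝ ι ∧ ∃ v : ι → E, (∀ i, v i ∈ p.2 i • C i) ∧ ∑ i, v i = p.1}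

theorem convex_weightedSums (hcv : ∀ i, Convex ℝ (C i)) : Convex ℝ (weightedSums C) := by
  rintro ⟨-, lam⟩ ⟨hlam, v, hv, rfl⟩ ⟨-, mu⟩ ⟨hmu, w, hw, rfl⟩ a b ha hb hab
  refine ⟨convex_stdSimplex ℝ ι hlam hmu ha hb hab, fun i => a • v i + b • w i, fun i => ?_, ?_⟩
  · simp only [Prod.smul_mk, Prod.mk_add_mk, Pi.add_apply, Pi.smul_apply, smul_eq_mul]
    rw [(hcv i).add_smul (mul_nonneg ha (hlam.1 i)) (mul_nonneg hb (hmu.1 i)), ← smul_smul,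
      ← smul_smul]
    exact add_mem_add (smul_mem_smul_set (hv i)) (smul_mem_smul_set (hw i))
  · simp [Finset.smul_sum, Finset.sum_add_distrib]

theorem mk_single_mem_weightedSums_iff [DecidableEq ι] (hne : ∀ i, (C i).Nonempty) {i : ι}
    {x : E} : (x, Pi.single i 1) ∈ weightedSums C ↔ x ∈ C i := by
  constructor
  · rintro ⟨-, v, hv, rfl⟩
    have hvj : ∀ j ≠ i, v j = 0 := fun j hj => by
      simpa [hj, zero_smul_set (hne j)] using hv j
    rw [Finset.sum_eq_single i (fun j _ => hvj j) (by simp)]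
    simpa using hv i
  · refine fun hx => ⟨single_mem_stdSimplex ℝ i, Pi.single i x, fun j => ?_, by simp⟩
    rcases eq_or_ne j i with rfl | hj
    · simpa using hx
    · simp [hj, zero_smul_set (hne j)]

theorem convexHull_iUnion_prod_single [DecidableEq ι] (hne : ∀ i, (C i).Nonempty)
    (hcv : ∀ i, Convex ℝ (C i)) :
    convexHull ℝ (⋃ i, C i ×ˢ ({Pi.single i 1} : Set (ι → ℝ))) = weightedSums C := by
  refine (convexHull_min ?_ (convex_weightedSums hcv)).antisymm ?_
  · refine Set.iUnion_subset fun i => ?_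
    rintro ⟨x, -⟩ ⟨hx, rfl : _ = Pi.single i 1⟩
    exact (mk_single_mem_weightedSums_iff hne).2 hx
  · rintro ⟨-, lam⟩ ⟨hlam, v, hv, rfl⟩
    choose c hc hcv using hv
    have hgen : ∀ i ∈ Finset.univ, (c i, (Pi.single i 1 : ι → ℝ)) ∈
        convexHull ℝ (⋃ i, C i ×ˢ ({Pi.single i 1} : Set (ι → ℝ))) := fun i _ =>
      subset_convexHull ℝ _ (Set.mem_iUnion.2 ⟨i, hc i, rfl⟩)
    convert (convex_convexHull ℝ _).sum_mem (fun i _ => hlam.1 i) hlam.2 hgen using 1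
    refine Prod.ext ?_ (funext fun j => ?_)
    · simp [← hcv, Prod.fst_sum]
    · simp [Prod.snd_sum, Finset.sum_apply, Pi.single_apply]

theorem add_mem_weightedSums {K : Set E} (hrec : ∀ i, recCone (C i) = K) {x d : E}
    {lam : ι → ℝ} (hx : (x, lam) ∈ weightedSums C) (hd : d ∈ K) :
    (x + d, lam) ∈ weightedSums C := by
  obtain ⟨hlam, v, hv, rfl⟩ := hx
  choose c hc hcv using hv
  refine ⟨hlam, fun i => lam i • (c i + d), fun i => smul_mem_smul_set ?_, ?_⟩
  · exact add_mem_of_mem_recCone (hc i) ((hrec i).symm ▸ hd)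
  · simp only [smul_add, Finset.sum_add_distrib, ← Finset.sum_smul, hlam.2, one_smul, hcv]

theorem sum_mem_weightedSums (hne : ∀ i, (C i).Nonempty) {K : PointedCone ℝ E}
    (hrec : ∀ i, recCone (C i) = K) {lam : ι → ℝ} (hlam : lam ∈ stdSimplex ℝ ι) {w : ι → E}
    (hw : ∀ i, lam i ≠ 0 → w i ∈ lam i • C i) (hw₀ : ∀ i, lam i = 0 → w i ∈ K) :
    (∑ i, w i, lam) ∈ weightedSums C := by
  classical
  have hsplit : ∑ i, w i =
      ∑ i, (if lam i = 0 then 0 else w i) + ∑ i, (if lam i = 0 then w i else 0) := by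
    rw [← Finset.sum_add_distrib]
    exact Finset.sum_congr rfl fun i _ => by split_ifs <;> simp
  rw [hsplit]
  refine add_mem_weightedSums hrec ⟨hlam, _, fun i => ?_, rfl⟩ (K.sum_mem fun i _ => ?_)
  · show _ ∈ lam i • C i
    split_ifs with h
    · rw [h, zero_smul_set (hne i)]
      exact Set.zero_mem_zero
    · exact hw i h
  · split_ifs with h
    · exact hw₀ i h
    · exact K.zero_mem

theorem recCone_weightedSums [DecidableEq ι] [Nonempty ι] (hne : ∀ i, (C i).Nonempty)
    {K : PointedCone ℝ E} (hrec : ∀ i, recCone (C i) = K) :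
    recCone (weightedSums C) = {p | p.1 ∈ K ∧ p.2 = 0} := by
  ext ⟨d, δ⟩
  constructor
  · intro hd
    obtain ⟨i₀⟩ := ‹Nonempty ι›
    obtain ⟨x₀, hx₀⟩ := hne i₀
    have hδ : δ = 0 := eq_zero_of_forall_add_smul_mem (bounded_stdSimplex ι)
      fun t ht => (hd _ ((mk_single_mem_weightedSums_iff hne).2 hx₀) t ht).1
    subst hδ
    refine ⟨?_, rfl⟩
    rw [← SetLike.mem_coe, ← hrec i₀]
    intro y hy t ht
    have := hd _ ((mk_single_mem_weightedSums_iff hne).2 hy) t ht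
    rw [Prod.smul_mk, smul_zero, Prod.mk_add_mk, add_zero] at this
    exact (mk_single_mem_weightedSums_iff hne).1 this
  · rintro ⟨hd, hδ⟩ ⟨x, lam⟩ hp t ht
    simp only at hd hδ
    subst hδ
    rw [Prod.smul_mk, smul_zero, Prod.mk_add_mk, add_zero]
    exact add_mem_weightedSums hrec hp (K.smul_mem ht hd)

end WeightedSums

section Closedness

variable {E ι : Type*} [NormedAddCommGroup E] [NormedSpace ℝ E] [FiniteDimensional ℝ E]
  [Fintype ι] {C : ι → Set E}

theorem isBounded_range_of_isBounded_range_sum (hcl : ∀ i, IsClosed (C i))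
    (hcv : ∀ i, Convex ℝ (C i)) {M : Submodule ℝ E}
    (hpt : ∀ u : ι → E, (∀ i, u i ∈ recCone (C i) ∧ u i ∈ M) → ∑ i, u i = 0 → u = 0)
    {lam : ℕ → ι → ℝ} (hlam : ∀ m, lam m ∈ stdSimplex ℝ ι) {v : ℕ → ι → E}
    (hv : ∀ m i, v m i ∈ lam m i • C i) (hvM : ∀ m i, v m i ∈ M)
    (hsum : IsBounded (Set.range fun m => ∑ i, v m i)) : IsBounded (Set.range v) := by
  by_contra hunb
  have hlarge : ∀ N : ℕ, ∃ m, (N : ℝ) + 1 ≤ ‖v m‖ := by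
    intro N
    by_contra! h
    exact hunb (isBounded_iff_forall_norm_le.2 ⟨N + 1, by rintro _ ⟨m, rfl⟩; exact (h m).le⟩)
  choose φ hφ using hlarge
  have hpos : ∀ N, 0 < ‖v (φ N)‖ := fun N => by linarith [hφ N, N.cast_nonneg (α := ℝ)]
  set u : ℕ → ι → E := fun N => ‖v (φ N)‖⁻¹ • v (φ N)
  have hu : ∀ N, u N ∈ Metric.sphere (0 : ι → E) 1 := fun N => by
    simp [u, norm_smul, (hpos N).ne']
  obtain ⟨u₀, hu₀, ψ, hψ, hlim⟩ := (isCompact_sphere (0 : ι → E) 1).tendsto_subseq hu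
  have hinv_le : ∀ N, ‖v (φ (ψ N))‖⁻¹ ≤ 1 / ((N : ℝ) + 1) := fun N => by
    rw [one_div]
    refine inv_anti₀ (by positivity) ((add_le_add_left ?_ 1).trans (hφ (ψ N)))
    exact_mod_cast hψ.id_le N
  have hinv : Tendsto (fun N => ‖v (φ (ψ N))‖⁻¹) atTop (𝓝 0) :=
    squeeze_zero (fun N => by positivity) hinv_le tendsto_one_div_add_atTop_nhds_zero_nat
  have hlim_i : ∀ i, Tendsto (fun N => u (ψ N) i) atTop (𝓝 (u₀ i)) := fun i =>
    ((continuous_apply i).tendsto _).comp hlim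
  have hrec : ∀ i, u₀ i ∈ recCone (C i) := fun i => by
    refine mem_recCone_of_tendsto (hcl i) (hcv i)
      (t := fun N => ‖v (φ (ψ N))‖⁻¹ * lam (φ (ψ N)) i)
      (fun N => mul_nonneg (by positivity) ((hlam _).1 i)) ?_ (fun N => ?_) (hlim_i i)
    · refine squeeze_zero (fun N => mul_nonneg (by positivity) ((hlam _).1 i))
        (fun N => ?_) hinv
      exact mul_le_of_le_one_right (by positivity) (mem_Icc_of_mem_stdSimplex (hlam _) i).2
    · rw [← smul_smul]
      exact smul_mem_smul_set (hv _ i)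
  have hM : ∀ i, u₀ i ∈ M := fun i =>
    M.closed_of_finiteDimensional.mem_of_tendsto (hlim_i i)
      (Eventually.of_forall fun N => M.smul_mem _ (hvM _ i))
  have hsum₀ : ∑ i, u₀ i = 0 := by
    obtain ⟨R, hR⟩ := isBounded_iff_forall_norm_le.1 hsum
    have h0 := NormedField.tendsto_zero_smul_of_tendsto_zero_of_bounded hinv
      (f := fun N => ∑ i, v (φ (ψ N)) i) (isBoundedUnder_of ⟨R, fun N => hR _ ⟨_, rfl⟩⟩)
    refine tendsto_nhds_unique (tendsto_finsetSum _ fun i _ => hlim_i i) ?_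
    exact h0.congr fun N => Finset.smul_sum
  have := hpt u₀ (fun i => ⟨hrec i, hM i⟩) hsum₀
  simp [this] at hu₀

theorem isClosed_weightedSums (hne : ∀ i, (C i).Nonempty) (hcl : ∀ i, IsClosed (C i))
    (hcv : ∀ i, Convex ℝ (C i)) {K : PointedCone ℝ E} (hrec : ∀ i, recCone (C i) = K) :
    IsClosed (weightedSums C) := by
  classical
  obtain ⟨M, hLM⟩ := K.lineal.exists_isCompl
  set π := M.projection K.lineal hLM.symm
  have hπL : ∀ x, x - π x ∈ K.lineal := M.sub_projection_mem hLM.symm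
  have hπC : ∀ i, ∀ c ∈ C i, π c ∈ C i := fun i c hc => by
    have hneg : -(c - π c) ∈ recCone (C i) :=
      (hrec i).superset (PointedCone.mem_lineal.1 (hπL c)).2
    simpa using add_mem_of_mem_recCone hc hneg
  refine IsSeqClosed.isClosed fun xs p hxs hlim => ?_
  choose hlam v hv hvsum using hxs
  have hv' : ∀ m i, π (v m i) ∈ (xs m).2 i • C i := fun m i => by
    obtain ⟨c, hc, hcv⟩ := hv m i
    rw [← hcv, map_smul]
    exact smul_mem_smul_set (hπC i c hc)
  have hsum_lim : Tendsto (fun m => ∑ i, π (v m i)) atTop (𝓝 (π p.1)) := by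
    simp_rw [← map_sum, hvsum]
    exact (π.continuous_of_finiteDimensional.tendsto _).comp
      ((continuous_fst.tendsto _).comp hlim)
  have hbdd := isBounded_range_of_isBounded_range_sum hcl hcv (M := M)
    (fun u hu => PointedCone.eq_zero_of_sum_eq_zero_of_disjoint_lineal hLM.disjoint
      fun i => ⟨(hrec i).subset (hu i).1, (hu i).2⟩)
    hlam hv' (fun m i => M.projection_apply_mem _ _)
    (Metric.isBounded_range_of_tendsto _ hsum_lim)
  obtain ⟨w, -, φ, hφ, hw⟩ := tendsto_subseq_of_bounded hbdd fun m => Set.mem_range_self m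
  have hw_i : ∀ i, Tendsto (fun m => π (v (φ m) i)) atTop (𝓝 (w i)) := fun i =>
    ((continuous_apply i).tendsto _).comp hw
  have hlam_lim : Tendsto (fun m => (xs m).2) atTop (𝓝 p.2) :=
    (continuous_snd.tendsto _).comp hlim
  have hlam_i : ∀ i, Tendsto (fun m => (xs (φ m)).2 i) atTop (𝓝 (p.2 i)) := fun i =>
    (((continuous_apply i).tendsto _).comp hlam_lim).comp hφ.tendsto_atTop
  have hp₂ : p.2 ∈ stdSimplex ℝ ι :=
    (isClosed_stdSimplex ℝ ι).mem_of_tendsto hlam_lim (Eventually.of_forall hlam)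
  have hsum_w : ∑ i, w i = π p.1 :=
    tendsto_nhds_unique (tendsto_finsetSum _ fun i _ => hw_i i) (hsum_lim.comp hφ.tendsto_atTop)
  have hmem : (π p.1, p.2) ∈ weightedSums C := hsum_w ▸ sum_mem_weightedSums hne hrec hp₂
    (fun i h => mem_smul_set_of_tendsto (hcl i) h (hlam_i i) (fun m => hv' _ i) (hw_i i))
    (fun i h => (hrec i).subset <| mem_recCone_of_tendsto (hcl i) (hcv i)
      (fun m => (hlam _).1 i) (h ▸ hlam_i i) (fun m => hv' _ i) (hw_i i))
  simpa using add_mem_weightedSums hrec hmem (PointedCone.mem_lineal.1 (hπL p.1)).1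

end Closedness

/-- `Q(C¹,…,Cᵏ)` is a closed convex set whose recession cone is `rec(C¹) × {0}`. -/
theorem stmt4 {n k : ℕ} (hk : 0 < k) (C : Fin k → Set (Fin n → ℝ))
    (hC : Admissible C) :
    IsClosed (CayleyQ C) ∧ Convex ℝ (CayleyQ C) ∧
      recCone (CayleyQ C) = {p | p.1 ∈ recCone (C ⟨0, hk⟩) ∧ p.2 = 0} := by
  obtain ⟨hne, hcl, hcv, hrec⟩ := hC
  have : Nonempty (Fin k) := ⟨⟨0, hk⟩⟩
  have hrec₀ : ∀ i, recCone (C i) = recPointedCone (C ⟨0, hk⟩) := fun i => hrec i _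
  rw [CayleyQ, convexHull_iUnion_prod_single hne hcv]
  exact ⟨isClosed_weightedSums hne hcl hcv hrec₀, convex_weightedSums hcv,
    recCone_weightedSums hne hrec₀⟩
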